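/- The coefficient function N(q_1, q_2, m, n, p) defined by the sum over x from 0 to p of (-1)^{p-x} C(p,x) [m+q_1-1]_{p-x} [-m+q_1-1]_x [n+q_2-1]_x [-n+q_2-1]_{p-x} equals the sum over x from 0 to p of (-1)^{p-x} C(p,x) [2q_2-2-x]_{p-x} (2q_1-1-p)_x [m+q_1-1]_{p-x} [n+q_2-1]_x, for all rational (or real) q_1, q_2, m, n and natural number p. -/

import Mathlib

/-!
Write `A, B, C, D` for the four arguments `m + q₁ - 1, -m + q₁ - 1, n + q₂ - 1, -n + q₂ - 1`
of `N`, so `2q₂ - 2 - x = D + (C - x)` and `(2q₁ - 1 - p)_x = [B + (A - (p - x))]_x`.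
Chu–Vandermonde expands these two factors, and multiplying by `[C]_x` and `[A]_{p-x}` closes
the truncated falling factorials back up: the `x`-th term of the right-hand side becomes
`(-1)^{p-x} C(p,x) g(p-x) h(x)` with `g`, `h` the binomial transforms of
`j ↦ [D]_j [C]_{p-j}` and `k ↦ [B]_k [A]_{p-k}`. Binomial inversion removes both transforms
from this alternating convolution, leaving the sum that defines `N`.
-/

/-- The coefficient function `N(q₁, q₂, m, n, p)` of the deformed `W̃₁₊∞` algebra. -/
noncomputable def Ncoef (q₁ q₂ m n : ℚ) (p : ℕ) : ℚ :=
  ∑ x ∈ Finset.range (p + 1),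
    (-1 : ℚ) ^ (p - x) * (p.choose x : ℚ) *
      (descPochhammer ℚ (p - x)).eval (m + q₁ - 1) *
      (descPochhammer ℚ x).eval (-m + q₁ - 1) *
      (descPochhammer ℚ x).eval (n + q₂ - 1) *
      (descPochhammer ℚ (p - x)).eval (-n + q₂ - 1)

open Finset Polynomial

theorem Nat.choose_mul_choose_sub_comm (n i j : ℕ) :
    n.choose i * (n - i).choose j = n.choose j * (n - j).choose i := by
  have hi := Nat.choose_mul (n := n) (Nat.le_add_right i j)
  have hj := Nat.choose_mul (n := n) (Nat.le_add_left j i)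
  rw [add_tsub_cancel_left] at hi
  rw [add_tsub_cancel_right] at hj
  rw [← hi, ← hj, Nat.choose_symm_add]

section BinomialTransform

variable {R : Type*} [CommRing R]

def binomialTransform (u : ℕ → R) (n : ℕ) : R :=
  ∑ k ∈ range (n + 1), (n.choose k : R) * u k

theorem sum_range_choose_mul_of_le {N M : ℕ} (h : N ≤ M) (f : ℕ → R) :
    ∑ k ∈ range (M + 1), (N.choose k : R) * f k =
      ∑ k ∈ range (N + 1), (N.choose k : R) * f k := by
  refine (sum_subset (range_subset_range.mpr (by omega)) fun k _ hk ↦ ?_).symm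
  rw [Nat.choose_eq_zero_of_lt (by simpa using hk), Nat.cast_zero, zero_mul]

theorem sum_range_alternating_choose_mul_choose (N k : ℕ) :
    ∑ x ∈ range (N + 1), (-1 : R) ^ (N - x) * N.choose x * x.choose k =
      if N = k then 1 else 0 := by
  have h := fwdDiff_iter_eq_sum_shift 1 (fun x ↦ (x.choose k : ℤ)) N 0
  rw [fwdDiff_iter_choose_zero] at h
  simpa [eq_comm] using congrArg (Int.cast : ℤ → R) h

theorem sum_range_alternating_choose_mul_binomialTransform (u : ℕ → R) (N : ℕ) :
    ∑ x ∈ range (N + 1), (-1 : R) ^ (N - x) * N.choose x * binomialTransform u x = u N := by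
  have expand : ∀ x ∈ range (N + 1), (-1 : R) ^ (N - x) * N.choose x * binomialTransform u x =
      ∑ k ∈ range (N + 1), (-1 : R) ^ (N - x) * N.choose x * x.choose k * u k := by
    intro x hx
    rw [binomialTransform, ← sum_range_choose_mul_of_le (Nat.lt_succ_iff.mp (mem_range.mp hx)),
      mul_sum]
    simp only [mul_assoc]
  rw [sum_congr rfl expand, sum_comm]
  simp_rw [← sum_mul, sum_range_alternating_choose_mul_choose, ite_mul, one_mul, zero_mul]
  simp

theorem sum_range_alternating_choose_sub_mul_binomialTransform (v : ℕ → R) {p j : ℕ}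
    (hj : j ≤ p) :
    ∑ x ∈ range (p + 1), (-1 : R) ^ (p - x) * (p - j).choose x * binomialTransform v x =
      (-1) ^ j * v (p - j) := by
  calc _ = ∑ x ∈ range (p - j + 1),
          ((p - j).choose x : R) * ((-1) ^ (p - x) * binomialTransform v x) := by
        rw [← sum_range_choose_mul_of_le (Nat.sub_le p j)]
        exact sum_congr rfl fun x _ ↦ by ring
    _ = (-1) ^ j * ∑ x ∈ range (p - j + 1),
          (-1 : R) ^ (p - j - x) * (p - j).choose x * binomialTransform v x := by
        rw [mul_sum]
        refine sum_congr rfl fun x hx ↦ ?_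
        have hx : x ≤ p - j := Nat.lt_succ_iff.mp (mem_range.mp hx)
        rw [show p - x = j + (p - j - x) by omega, pow_add]
        ring
    _ = _ := by rw [sum_range_alternating_choose_mul_binomialTransform]

theorem sum_range_alternating_choose_mul_binomialTransform_mul (p : ℕ) (u v : ℕ → R) :
    ∑ x ∈ range (p + 1),
        (-1 : R) ^ (p - x) * p.choose x * binomialTransform u (p - x) * binomialTransform v x =
      ∑ x ∈ range (p + 1), (-1 : R) ^ (p - x) * p.choose x * u (p - x) * v x := by
  have expand : ∀ x ∈ range (p + 1),
      (-1 : R) ^ (p - x) * p.choose x * binomialTransform u (p - x) * binomialTransform v x =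
        ∑ j ∈ range (p + 1), u j * p.choose j *
          ((-1) ^ (p - x) * (p - j).choose x * binomialTransform v x) := by
    intro x _
    rw [binomialTransform, ← sum_range_choose_mul_of_le (Nat.sub_le p x), mul_sum, sum_mul]
    refine sum_congr rfl fun j _ ↦ ?_
    have := congrArg (Nat.cast : ℕ → R) (Nat.choose_mul_choose_sub_comm p x j)
    push_cast at this
    linear_combination (-1 : R) ^ (p - x) * u j * binomialTransform v x * this
  rw [sum_congr rfl expand, sum_comm]
  have collapse : ∀ j ∈ range (p + 1), ∑ x ∈ range (p + 1), u j * p.choose j *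
      ((-1 : R) ^ (p - x) * (p - j).choose x * binomialTransform v x) =
        (-1) ^ j * p.choose j * u j * v (p - j) := by
    intro j hj
    rw [← mul_sum, sum_range_alternating_choose_sub_mul_binomialTransform v
      (Nat.lt_succ_iff.mp (mem_range.mp hj))]
    ring
  rw [sum_congr rfl collapse, ← sum_range_reflect]
  refine sum_congr rfl fun x hx ↦ ?_
  have hx : x ≤ p := Nat.lt_succ_iff.mp (mem_range.mp hx)
  rw [add_tsub_cancel_right, Nat.sub_sub_self hx, Nat.choose_symm hx]

theorem descPochhammer_eval_add (a b : R) (k : ℕ) :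
    (descPochhammer R k).eval (a + b) =
      binomialTransform
        (fun i ↦ (descPochhammer R i).eval a * (descPochhammer R (k - i)).eval b) k := by
  have smeval_eq_eval (n : ℕ) (r : R) :
      (descPochhammer ℤ n).smeval r = (descPochhammer R n).eval r := by
    rw [descPochhammer_smeval_eq_ascPochhammer, ascPochhammer_smeval_eq_eval,
      descPochhammer_eval_eq_ascPochhammer]
  rw [← smeval_eq_eval, Ring.descPochhammer_smeval_add k (Commute.all a b),
    Nat.sum_antidiagonal_eq_sum_range_succ_mk, binomialTransform]
  simp only [smeval_eq_eval]

theorem descPochhammer_eval_add_sub_mul (a b : R) (y z : ℕ) :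
    (descPochhammer R y).eval (a + (b - z)) * (descPochhammer R z).eval b =
      binomialTransform
        (fun i ↦ (descPochhammer R i).eval a * (descPochhammer R (y + z - i)).eval b) y := by
  rw [descPochhammer_eval_add, binomialTransform, binomialTransform, sum_mul]
  refine sum_congr rfl fun i hi ↦ ?_
  have hi : i ≤ y := Nat.lt_succ_iff.mp (mem_range.mp hi)
  have concat := congrArg (eval b) (descPochhammer_mul (R := R) z (y - i))
  rw [eval_mul, eval_comp, eval_sub, eval_X, eval_natCast] at concat
  rw [show y + z - i = z + (y - i) by omega, ← concat]
  ring

end BinomialTransform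

/-- Alternative form of the coefficient function  (Lemma 3.4). -/
theorem Ncoef_eq_alternative_form (q₁ q₂ m n : ℚ) (p : ℕ) :
    Ncoef q₁ q₂ m n p =
      ∑ x ∈ Finset.range (p + 1),
        (-1 : ℚ) ^ (p - x) * (p.choose x : ℚ) *
          (descPochhammer ℚ (p - x)).eval (2 * q₂ - 2 - x) *
          (ascPochhammer ℚ x).eval (2 * q₁ - 1 - p) *
          (descPochhammer ℚ (p - x)).eval (m + q₁ - 1) *
          (descPochhammer ℚ x).eval (n + q₂ - 1) := by
  set A := m + q₁ - 1
  set B := -m + q₁ - 1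
  set C := n + q₂ - 1
  set D := -n + q₂ - 1
  let G j := (descPochhammer ℚ j).eval D * (descPochhammer ℚ (p - j)).eval C
  let H k := (descPochhammer ℚ k).eval B * (descPochhammer ℚ (p - k)).eval A
  have hG : ∀ x ≤ p, (descPochhammer ℚ (p - x)).eval (2 * q₂ - 2 - x) *
      (descPochhammer ℚ x).eval C = binomialTransform G (p - x) := by
    intro x hx
    have h := descPochhammer_eval_add_sub_mul D C (p - x) x
    rwa [Nat.sub_add_cancel hx, show D + (C - x) = 2 * q₂ - 2 - x by ring] at h
  have hH : ∀ x ≤ p, (ascPochhammer ℚ x).eval (2 * q₁ - 1 - p) *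
      (descPochhammer ℚ (p - x)).eval A = binomialTransform H x := by
    intro x hx
    have h := descPochhammer_eval_add_sub_mul B A x (p - x)
    rwa [Nat.add_sub_cancel' hx, descPochhammer_eval_eq_ascPochhammer, Nat.cast_sub hx,
      show B + (A - (p - x)) - x + 1 = 2 * q₁ - 1 - p by ring] at h
  calc Ncoef q₁ q₂ m n p
      = ∑ x ∈ range (p + 1), (-1 : ℚ) ^ (p - x) * p.choose x * G (p - x) * H x := by
        refine sum_congr rfl fun x hx ↦ ?_
        simp only [G, H, Nat.sub_sub_self (Nat.lt_succ_iff.mp (mem_range.mp hx))]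
        ring
    _ = ∑ x ∈ range (p + 1), (-1 : ℚ) ^ (p - x) * p.choose x *
          binomialTransform G (p - x) * binomialTransform H x :=
        (sum_range_alternating_choose_mul_binomialTransform_mul p G H).symm
    _ = _ := by
        refine sum_congr rfl fun x hx ↦ ?_
        have hx : x ≤ p := Nat.lt_succ_iff.mp (mem_range.mp hx)
        rw [← hG x hx, ← hH x hx]
        ring
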